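/- arXiv:2211.10509 — 2 statements merged into one kernel-verified Lean document; each statement's English description precedes it below -/
import Mathlib

section
/- Let W be an integrable real random variable with continuous distribution function, and α ∈ (0,1). Then the expected shortfall ES_α = (1/α)·E[W·1_{W ≤ w*}], where w* satisfies P(W ≤ w*) = α, equals sup over real x of { x + (1/α)·E[min(W - x, 0)] }, and the supremum is attained at x = w*. -/
/-!
On `{W ≤ w*}` one has `min (W - w*) 0 = W - w*`, so the objective at `w*` is exactly the
expected shortfall. For any other `x`, pointwise `min (W - x) 0 ≤ min (W - w*) 0 + (w* - x)·1_{W ≤ w*}`;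
taking expectations and using `P(W ≤ w*) = α`, the objective at `x` is at most the one at `w*`.
-/

open MeasureTheory

section Pointwise

variable {Ω : Type*} (W : Ω → ℝ)

lemma min_sub_zero_eq_indicator (a : ℝ) :
    (fun ω => min (W ω - a) 0) = {ω | W ω ≤ a}.indicator (fun ω => W ω - a) := by
  funext ω
  by_cases h : W ω ≤ a
  · simp [h]
  · simp [h, (lt_of_not_ge h).le]

lemma min_sub_zero_le_add_indicator (a x : ℝ) (ω : Ω) :
    min (W ω - x) 0 ≤ min (W ω - a) 0 + {ω | W ω ≤ a}.indicator (fun _ => a - x) ω := by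
  by_cases h : W ω ≤ a
  · simp only [Set.indicator_of_mem (show ω ∈ {ω | W ω ≤ a} from h), min_eq_left (sub_nonpos.2 h)]
    linarith [min_le_left (W ω - x) 0]
  · simp [h, (lt_of_not_ge h).le]

end Pointwise

section Integral

variable {Ω : Type*} [MeasurableSpace Ω] (μ : Measure Ω) [IsFiniteMeasure μ]
  {W : Ω → ℝ} (hWmeas : Measurable W) (hWint : Integrable W μ)

include hWint in
lemma integrable_min_sub_zero (x : ℝ) : Integrable (fun ω => min (W ω - x) 0) μ :=
  (hWint.sub (integrable_const x)).inf (integrable_const 0)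

include hWmeas hWint in
lemma integral_min_sub_zero (a : ℝ) :
    ∫ ω, min (W ω - a) 0 ∂μ = ∫ ω in {ω | W ω ≤ a}, W ω ∂μ - a * μ.real {ω | W ω ≤ a} := by
  rw [min_sub_zero_eq_indicator, integral_indicator (measurableSet_le hWmeas measurable_const),
    integral_sub hWint.restrict (integrable_const _), setIntegral_const, smul_eq_mul, mul_comm]

include hWmeas hWint in
/-- The supergradient inequality of the concave map `x ↦ E[min (W - x) 0]` at `a`. -/
lemma integral_min_sub_zero_le (a x : ℝ) :
    ∫ ω, min (W ω - x) 0 ∂μ ≤ ∫ ω, min (W ω - a) 0 ∂μ + (a - x) * μ.real {ω | W ω ≤ a} := by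
  have hS : MeasurableSet {ω | W ω ≤ a} := measurableSet_le hWmeas measurable_const
  have hind : Integrable ({ω | W ω ≤ a}.indicator fun _ => a - x) μ :=
    (integrable_const _).indicator hS
  calc ∫ ω, min (W ω - x) 0 ∂μ
      ≤ ∫ ω, (min (W ω - a) 0 + {ω | W ω ≤ a}.indicator (fun _ => a - x) ω) ∂μ :=
        integral_mono (integrable_min_sub_zero μ hWint x)
          ((integrable_min_sub_zero μ hWint a).add hind) (min_sub_zero_le_add_indicator W a x)
    _ = ∫ ω, min (W ω - a) 0 ∂μ + (a - x) * μ.real {ω | W ω ≤ a} := by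
        rw [integral_add (integrable_min_sub_zero μ hWint a) hind, integral_indicator hS,
          setIntegral_const, smul_eq_mul, mul_comm]

end Integral

section RockafellarUryasev

variable {Ω : Type*} [MeasurableSpace Ω] (μ : Measure Ω)

noncomputable def rockafellarUryasev (W : Ω → ℝ) (α x : ℝ) : ℝ :=
  x + (1 / α) * ∫ ω, min (W ω - x) 0 ∂μ

variable [IsFiniteMeasure μ] {W : Ω → ℝ} (hWmeas : Measurable W) (hWint : Integrable W μ)
  {α a : ℝ} (hα0 : 0 < α) (ha : μ.real {ω | W ω ≤ a} = α)

include hWmeas hWint hα0 ha in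
lemma rockafellarUryasev_le (x : ℝ) :
    rockafellarUryasev μ W α x ≤ rockafellarUryasev μ W α a := by
  have h := integral_min_sub_zero_le μ hWmeas hWint a x
  rw [ha] at h
  unfold rockafellarUryasev
  have h' := mul_le_mul_of_nonneg_left h (one_div_pos.2 hα0).le
  rw [mul_add, mul_comm (a - x), ← mul_assoc, one_div_mul_cancel hα0.ne', one_mul] at h'
  linarith

include hWmeas hWint hα0 ha in
lemma iSup_rockafellarUryasev :
    ⨆ x, rockafellarUryasev μ W α x = rockafellarUryasev μ W α a :=
  have hle := rockafellarUryasev_le μ hWmeas hWint hα0 ha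
  le_antisymm (ciSup_le hle) (le_ciSup ⟨_, Set.forall_mem_range.2 hle⟩ a)

include hWmeas hWint hα0 ha in
lemma rockafellarUryasev_eq_expectedShortfall :
    rockafellarUryasev μ W α a = (1 / α) * ∫ ω in {ω | W ω ≤ a}, W ω ∂μ := by
  rw [rockafellarUryasev, integral_min_sub_zero μ hWmeas hWint, ha]
  field_simp
  ring

end RockafellarUryasev

theorem expected_shortfall_rockafellar_uryasev_general
    {Ω : Type*} [MeasurableSpace Ω] (μ : Measure Ω) [IsProbabilityMeasure μ]
    (W : Ω → ℝ) (hWmeas : Measurable W) (hWint : Integrable W μ)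
    (α : ℝ) (hα0 : 0 < α)
    (wstar : ℝ) (hw : μ {ω | W ω ≤ wstar} = ENNReal.ofReal α) :
    ((1 / α) * ∫ ω in {ω | W ω ≤ wstar}, W ω ∂μ =
        ⨆ x : ℝ, (x + (1 / α) * ∫ ω, min (W ω - x) 0 ∂μ)) ∧
    ((1 / α) * ∫ ω in {ω | W ω ≤ wstar}, W ω ∂μ =
        wstar + (1 / α) * ∫ ω, min (W ω - wstar) 0 ∂μ) := by
  have hreal : μ.real {ω | W ω ≤ wstar} = α := by
    rw [measureReal_def, hw, ENNReal.toReal_ofReal hα0.le]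
  have hES := rockafellarUryasev_eq_expectedShortfall μ hWmeas hWint hα0 hreal
  exact ⟨hES.symm.trans (iSup_rockafellarUryasev μ hWmeas hWint hα0 hreal).symm, hES.symm⟩

/-- Rockafellar–Uryasev representation of expected shortfall: with
`P(W ≤ w*) = α`, the expected shortfall `(1/α)·E[W·1_{W ≤ w*}]` equals
`⨆ x, x + (1/α)·E[min(W - x, 0)]`, and the supremum is attained at `x = w*`. -/
theorem expected_shortfall_rockafellar_uryasev
    {Ω : Type*} [MeasurableSpace Ω] (μ : Measure Ω) [IsProbabilityMeasure μ]
    (W : Ω → ℝ) (hWmeas : Measurable W) (hWint : Integrable W μ)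
    (hcont : Continuous fun x : ℝ => (μ {ω | W ω ≤ x}).toReal)
    (α : ℝ) (hα0 : 0 < α) (hα1 : α < 1)
    (wstar : ℝ) (hw : μ {ω | W ω ≤ wstar} = ENNReal.ofReal α) :
    ((1 / α) * ∫ ω in {ω | W ω ≤ wstar}, W ω ∂μ =
        ⨆ x : ℝ, (x + (1 / α) * ∫ ω, min (W ω - x) 0 ∂μ)) ∧
    ((1 / α) * ∫ ω in {ω | W ω ≤ wstar}, W ω ∂μ =
        wstar + (1 / α) * ∫ ω, min (W ω - wstar) 0 ∂μ) :=
  expected_shortfall_rockafellar_uryasev_general μ W hWmeas hWint α hα0 wstar hw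
end

section
/- For an integrable random variable W and α ∈ (0,1), the function h(x) = x + (1/α)·E[min(W - x, 0)] satisfies h(x) → -∞ as x → +∞ and h(x) is bounded above; in particular sup_x h(x) is finite. -/
open MeasureTheory Filter

/-! The integrand `min (W - x) 0` is bounded by both `W - x` and `0`, so with `c = E[W]` the
objective is dominated by `x + α⁻¹ · min (c - x) 0`, a piecewise linear function of slope `1`
left of `c` and slope `1 - α⁻¹ < 0` right of `c`. -/

theorem integral_min_sub_const_zero_le {Ω : Type*} [MeasurableSpace Ω] {μ : Measure Ω}
    [IsProbabilityMeasure μ] {W : Ω → ℝ} (hW : Integrable W μ) (x : ℝ) :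
    ∫ ω, min (W ω - x) 0 ∂μ ≤ min ((∫ ω, W ω ∂μ) - x) 0 := by
  have hsub : Integrable (fun ω => W ω - x) μ := hW.sub (integrable_const x)
  refine le_min ?_ (integral_nonpos fun ω => min_le_right _ _)
  calc ∫ ω, min (W ω - x) 0 ∂μ ≤ ∫ ω, W ω - x ∂μ :=
        integral_mono (hsub.inf (integrable_const 0)) hsub fun ω => min_le_left _ _
    _ = (∫ ω, W ω ∂μ) - x := by simp [integral_sub hW (integrable_const x)]

theorem add_mul_min_sub_zero_le {k : ℝ} (hk : 1 ≤ k) (c x : ℝ) :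
    x + k * min (c - x) 0 ≤ c := by
  rcases le_total x c with hx | hx
  · rw [min_eq_right (by linarith)]
    linarith
  · rw [min_eq_left (by linarith)]
    nlinarith

theorem tendsto_add_mul_min_sub_zero_atBot {k : ℝ} (hk : 1 < k) (c : ℝ) :
    Tendsto (fun x : ℝ => x + k * min (c - x) 0) atTop atBot := by
  have hlin : Tendsto (fun x : ℝ => (1 - k) * x + k * c) atTop atBot :=
    tendsto_atBot_add_const_right _ _
      ((tendsto_const_mul_atBot_of_neg (by linarith)).mpr tendsto_id)
  refine tendsto_atBot_mono (fun x => ?_) hlin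
  have := mul_le_mul_of_nonneg_left (min_le_left (c - x) 0) (by linarith : (0 : ℝ) ≤ k)
  linarith

/-- The Rockafellar–Uryasev objective `h(x) = x + (1/α)·E[min(W - x, 0)]`
tends to `-∞` as `x → +∞` and is bounded above; in particular its supremum
is finite. -/
theorem rockafellar_uryasev_objective_coercive
    {Ω : Type*} [MeasurableSpace Ω] (μ : Measure Ω) [IsProbabilityMeasure μ]
    (W : Ω → ℝ) (hWint : Integrable W μ)
    (α : ℝ) (hα0 : 0 < α) (hα1 : α < 1) :
    Tendsto (fun x : ℝ => x + (1 / α) * ∫ ω, min (W ω - x) 0 ∂μ) atTop atBot ∧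
    BddAbove (Set.range fun x : ℝ => x + (1 / α) * ∫ ω, min (W ω - x) 0 ∂μ) := by
  set c := ∫ ω, W ω ∂μ
  have hk : 1 < 1 / α := one_lt_one_div hα0 hα1
  have hdom : ∀ x : ℝ,
      x + (1 / α) * ∫ ω, min (W ω - x) 0 ∂μ ≤ x + (1 / α) * min (c - x) 0 := fun x => by
    gcongr
    exact integral_min_sub_const_zero_le hWint x
  refine ⟨tendsto_atBot_mono hdom (tendsto_add_mul_min_sub_zero_atBot hk c), c, ?_⟩
  rintro _ ⟨x, rfl⟩
  exact (hdom x).trans (add_mul_min_sub_zero_le hk.le c x)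
end
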